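/- Let d = (d_1,...,d_h) with 1 ≤ d_1 ≤ ... ≤ d_h, σ = Σ_{i=1}^h (d_i-1), and for 2 ≤ m ≤ σ define φ_m = HF(S̄/(x^d); m) - HF(S̄/L(d;m-1); m) in S̄ = k[x_1,...,x_h], where L(d;m-1) = (x^d) + (U_{m-1}) and U_{m-1} is the lex-largest degree-(m-1) monomial not in (x^d). Then φ_m > 0 for all 2 ≤ m ≤ σ; equivalently, the degree-m component of the ideal (U_{m-1}) is not entirely contained in (x^d). -/

import Mathlib

/-! Write `u` for the exponent of `U_{m-1}`. As `U_{m-1} ∉ (x^d)`, every `u_i < d_i`, and as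
`deg u = m - 1 < σ = ∑ (d_i - 1)`, some `u_j < d_j - 1`. Then `x_j U_{m-1}` is a monomial of
degree `m` lying in `L(d; m-1)` but not in `(x^d)`, so the surjection
`(S/(x^d))_m → (S/L(d; m-1))_m` has a nonzero kernel. -/

open MvPolynomial Finsupp

variable {k : Type} [Field k]

/-- Hilbert function of `S/I` in degree `m`, where `S = k[x_1,...,x_n]`. -/
noncomputable def HF {n : ℕ} (I : Ideal (MvPolynomial (Fin n) k)) (m : ℕ) : ℕ :=
  Module.finrank k
    ((homogeneousSubmodule (Fin n) k m).map (Ideal.Quotient.mkₐ k I).toLinearMap)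

/-- The ideal `(x_1^{d_1},...,x_h^{d_h})` inside `k[x_1,...,x_n]`. -/
noncomputable def pows {n h : ℕ} (hh : h ≤ n) (d : Fin h → ℕ) :
    Ideal (MvPolynomial (Fin n) k) :=
  Ideal.span (Set.range fun i : Fin h => (X (Fin.castLE hh i) : MvPolynomial (Fin n) k) ^ d i)

/-- `u` is the exponent vector of the lexicographically largest monomial of degree `D`
not belonging to the ideal `I` (convention `x_1 > x_2 > ... > x_n`). -/
def IsLexLargestNonmember {n : ℕ} (I : Ideal (MvPolynomial (Fin n) k)) (D : ℕ)
    (u : Fin n →₀ ℕ) : Prop :=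
  (∑ i, u i) = D ∧ (monomial u (1 : k)) ∉ I ∧
    ∀ v : Fin n →₀ ℕ, (∑ i, v i) = D → (monomial v (1 : k)) ∉ I → toLex v ≤ toLex u

/-- Hilbert–Samuel (cumulative Hilbert) function of `S/I`. -/
noncomputable def cumHF {n : ℕ} (I : Ideal (MvPolynomial (Fin n) k)) (m : ℕ) : ℤ :=
  ∑ j ∈ Finset.range (m + 1), (HF I j : ℤ)

/-- Forward difference operator. -/
def diffOp (f : ℕ → ℤ) : ℕ → ℤ := fun m => f (m + 1) - f m

/-- The multiplicity `e(S/I)`, where `t = dim S/I`: the eventual (constant) value of the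
`t`-th finite difference of the Hilbert–Samuel function of `S/I`. -/
noncomputable def mult {n : ℕ} (I : Ideal (MvPolynomial (Fin n) k)) (t : ℕ) : ℤ :=
  Filter.limsup (diffOp^[t] (cumHF I)) Filter.atTop

/-- The height of an ideal: the infimum of heights of primes containing it. -/
noncomputable def idealHeight {n : ℕ} (I : Ideal (MvPolynomial (Fin n) k)) : ℕ∞ :=
  ⨅ (P : PrimeSpectrum (MvPolynomial (Fin n) k)) (_ : I ≤ P.asIdeal), Order.height P

/-- A homogeneous ideal. -/
def IsHomogeneousIdeal {n : ℕ} (I : Ideal (MvPolynomial (Fin n) k)) : Prop :=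
  ∀ f ∈ I, ∀ m : ℕ, homogeneousComponent m f ∈ I

/-- Hilbert function of the graded submodule `a/f` of `S/f` in degree `m`. -/
noncomputable def HFsub {n : ℕ} (f a : Ideal (MvPolynomial (Fin n) k)) (m : ℕ) : ℕ :=
  Module.finrank k
    ((Submodule.map (Ideal.Quotient.mkₐ k f).toLinearMap (homogeneousSubmodule (Fin n) k m)) ⊓
      (Submodule.map (Ideal.Quotient.mkₐ k f).toLinearMap (Submodule.restrictScalars k a)) :
      Submodule k (MvPolynomial (Fin n) k ⧸ f))

theorem Submodule.finrank_map_lt_of_mem_ker {K V W : Type*} [DivisionRing K] [AddCommGroup V]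
    [Module K V] [AddCommGroup W] [Module K W] (f : V →ₗ[K] W) {p : Submodule K V}
    [FiniteDimensional K p] {x : V} (hxp : x ∈ p) (hx0 : x ≠ 0) (hfx : f x = 0) :
    Module.finrank K (p.map f) < Module.finrank K p := by
  have hker : LinearMap.ker (f.domRestrict p) ≠ ⊥ := fun hbot => by
    have : (⟨x, hxp⟩ : p) ∈ LinearMap.ker (f.domRestrict p) := hfx
    rw [hbot, Submodule.mem_bot] at this
    exact hx0 (congrArg Subtype.val this)
  have := Submodule.nontrivial_iff_ne_bot.mpr hker
  rw [← LinearMap.range_domRestrict, ← LinearMap.finrank_range_add_finrank_ker (f.domRestrict p)]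
  exact Nat.lt_add_of_pos_right Module.finrank_pos

theorem finrank_map_mkₐ_lt_of_le {S : Type*} [CommRing S] [Algebra k S] {I J : Ideal S}
    (hIJ : I ≤ J) {H : Submodule k S} [FiniteDimensional k H] {x : S} (hxH : x ∈ H)
    (hxJ : x ∈ J) (hxI : x ∉ I) :
    Module.finrank k (H.map (Ideal.Quotient.mkₐ k J).toLinearMap) <
      Module.finrank k (H.map (Ideal.Quotient.mkₐ k I).toLinearMap) := by
  set F := (Ideal.quotientMapₐ J (AlgHom.id k S) hIJ).toLinearMap
  have hcomp : F ∘ₗ (Ideal.Quotient.mkₐ k I).toLinearMap = (Ideal.Quotient.mkₐ k J).toLinearMap :=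
    LinearMap.ext fun _ => rfl
  rw [← hcomp, Submodule.map_comp]
  refine Submodule.finrank_map_lt_of_mem_ker F (Submodule.mem_map_of_mem hxH) ?_ ?_
  · simpa [Ideal.Quotient.eq_zero_iff_mem] using hxI
  · exact Ideal.Quotient.eq_zero_iff_mem.mpr hxJ

theorem HF_lt_of_le {n : ℕ} {I J : Ideal (MvPolynomial (Fin n) k)} (hIJ : I ≤ J) {m : ℕ}
    {x : MvPolynomial (Fin n) k} (hx : x.IsHomogeneous m) (hxJ : x ∈ J) (hxI : x ∉ I) :
    HF J m < HF I m :=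
  have : FiniteDimensional k (homogeneousSubmodule (Fin n) k m) :=
    Module.Finite.iff_fg.mpr (homogeneousSubmodule_fg (Fin n) k m)
  finrank_map_mkₐ_lt_of_le hIJ ((mem_homogeneousSubmodule m x).mpr hx) hxJ hxI

theorem monomial_mem_pows_iff {n h : ℕ} (hh : h ≤ n) (d : Fin h → ℕ) (v : Fin n →₀ ℕ) :
    monomial v (1 : k) ∈ pows hh d ↔ ∃ i, d i ≤ v (Fin.castLE hh i) := by
  have hpows : pows (k := k) hh d = Ideal.span ((fun s => monomial s (1 : k)) ''
      Set.range fun i => single (Fin.castLE hh i) (d i)) := by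
    simp only [pows, ← Set.range_comp, Function.comp_def, X_pow_eq_monomial]
  classical
  rw [hpows, mem_ideal_span_monomial_image, support_monomial, if_neg one_ne_zero]
  simp [Finsupp.single_le_iff]

theorem stmt11_general {k : Type} [Field k] {h : ℕ} (d : Fin h → ℕ)
    (m : ℕ) (hm2 : 2 ≤ m) (hmσ : m ≤ ∑ i, (d i - 1))
    (u : Fin h →₀ ℕ)
    (hu : IsLexLargestNonmember (pows (k := k) le_rfl d) (m - 1) u) :
    HF (pows (k := k) le_rfl d ⊔ Ideal.span {monomial u (1 : k)}) m <
      HF (pows (k := k) le_rfl d) m := by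
  obtain ⟨hsum, hu_notMem, -⟩ := hu
  have hu_lt : ∀ i, u i < d i := by
    simpa [monomial_mem_pows_iff] using hu_notMem
  obtain ⟨j, -, hj⟩ : ∃ j ∈ Finset.univ, u j < d j - 1 :=
    Finset.exists_lt_of_sum_lt (by omega)
  refine HF_lt_of_le le_sup_left (x := monomial (u + single j 1) 1) ?_ ?_ ?_
  · refine isHomogeneous_monomial _ ?_
    rw [map_add, degree_single, degree_eq_sum, hsum]
    omega
  · exact Ideal.mem_sup_right <| Ideal.mem_span_singleton.mpr
      ⟨monomial (single j 1) 1, by rw [monomial_mul, one_mul]⟩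
  · have hv_lt : ∀ i, (u + single j 1 : Fin h →₀ ℕ) i < d i := fun i => by
      obtain rfl | hij := eq_or_ne i j
      · rw [Finsupp.add_apply, single_eq_same]; omega
      · rw [Finsupp.add_apply, single_eq_of_ne hij, add_zero]; exact hu_lt i
    simpa [monomial_mem_pows_iff] using hv_lt

theorem stmt11 {k : Type} [Field k] {h : ℕ} (d : Fin h → ℕ) (hd1 : ∀ i, 1 ≤ d i)
    (hmono : Monotone d) (m : ℕ) (hm2 : 2 ≤ m) (hmσ : m ≤ ∑ i, (d i - 1))
    (u : Fin h →₀ ℕ)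
    (hu : IsLexLargestNonmember (pows (k := k) le_rfl d) (m - 1) u) :
    HF (pows (k := k) le_rfl d ⊔ Ideal.span {monomial u (1 : k)}) m <
      HF (pows (k := k) le_rfl d) m :=
  stmt11_general d m hm2 hmσ u hu
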